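/- arXiv:1606.00121 — 4 statements merged into one kernel-verified Lean document; each statement's English description precedes it below -/
import Mathlib

section
/- (Discrete Green's formula) Let B be a bounded subset of Z_h^2 and f: closure(B) → R, where closure(B) = B ∪ ∂B. Then for i = 1, 2: the sum over z ∈ ∂B of f(z) n_i^{±}(z) s(z) equals h^2 times the sum over z ∈ B of ∂_i^{∓,h}f(z). Equivalently, ∫_{∂B} f n_i^{±} dS = ∫_B ∂_i^{∓,h} f dV^h. -/
noncomputable section
open Complex MeasureTheory Set
open scoped ENNReal

/-- The scaled square lattice `Z_h^2 ⊂ ℂ`. -/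
def latt (h : ℝ) : Set ℂ := {z | ∃ m n : ℤ, z = h * ((m : ℂ) + (n : ℂ) * Complex.I)}

/-- Characteristic function of `B`. -/
def chi (B : Set ℂ) : ℂ → ℝ := B.indicator fun _ => (1 : ℝ)

/-- Forward difference quotient in direction `1` with step `h`. -/
def dp1 (h : ℝ) (f : ℂ → ℝ) (z : ℂ) : ℝ := (f (z + h) - f z) / h
/-- Backward difference quotient in direction `1` with step `h`. -/
def dm1 (h : ℝ) (f : ℂ → ℝ) (z : ℂ) : ℝ := (f z - f (z - h)) / h
/-- Forward difference quotient in direction `i` with step `h`. -/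
def dp2 (h : ℝ) (f : ℂ → ℝ) (z : ℂ) : ℝ := (f (z + h * Complex.I) - f z) / h
/-- Backward difference quotient in direction `i` with step `h`. -/
def dm2 (h : ℝ) (f : ℂ → ℝ) (z : ℂ) : ℝ := (f z - f (z - h * Complex.I)) / h

/-- `Σ_{i=1,2} (∂_i^{+,h}χ_B)^2 + (∂_i^{-,h}χ_B)^2`. -/
def Qsum (h : ℝ) (B : Set ℂ) (z : ℂ) : ℝ :=
  (dp1 h (chi B) z) ^ 2 + (dm1 h (chi B) z) ^ 2 + (dp2 h (chi B) z) ^ 2 + (dm2 h (chi B) z) ^ 2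

/-- Density of the discrete boundary measure. -/
def sden (h : ℝ) (B : Set ℂ) (z : ℂ) : ℝ := (h ^ 2 / 2) * Real.sqrt (Qsum h B z)

/-- Components of the discrete outer normal vector (extended by zero, since `x/0 = 0`). -/
def n1p (h : ℝ) (B : Set ℂ) (z : ℂ) : ℝ := -2 * dp1 h (chi B) z / Real.sqrt (Qsum h B z)
def n1m (h : ℝ) (B : Set ℂ) (z : ℂ) : ℝ := -2 * dm1 h (chi B) z / Real.sqrt (Qsum h B z)
def n2p (h : ℝ) (B : Set ℂ) (z : ℂ) : ℝ := -2 * dp2 h (chi B) z / Real.sqrt (Qsum h B z)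
def n2m (h : ℝ) (B : Set ℂ) (z : ℂ) : ℝ := -2 * dm2 h (chi B) z / Real.sqrt (Qsum h B z)

/-- Five-point neighbourhood `N(z) = {z, z±h, z±hi}`. -/
def nbhd (h : ℝ) (z : ℂ) : Set ℂ := {z, z + h, z - h, z + h * Complex.I, z - h * Complex.I}

/-- Discrete boundary of `B ⊆ Z_h^2`. -/
def dBdry (h : ℝ) (B : Set ℂ) : Set ℂ :=
  {z ∈ latt h | (nbhd h z ∩ B).Nonempty ∧ (nbhd h z \ B).Nonempty}

/-- Discrete interior. -/
def dInt (h : ℝ) (B : Set ℂ) : Set ℂ := B \ dBdry h B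

/-- Discrete closure. -/
def dCl (h : ℝ) (B : Set ℂ) : Set ℂ := B ∪ dBdry h B

/-- Complex forward/backward/symmetric differences, and the discrete ∂̄ and ∂ operators. -/
def cdp1 (h : ℝ) (f : ℂ → ℂ) (z : ℂ) : ℂ := (f (z + h) - f z) / h
def cdm1 (h : ℝ) (f : ℂ → ℂ) (z : ℂ) : ℂ := (f z - f (z - h)) / h
def cdp2 (h : ℝ) (f : ℂ → ℂ) (z : ℂ) : ℂ := (f (z + h * Complex.I) - f z) / h
def cdm2 (h : ℝ) (f : ℂ → ℂ) (z : ℂ) : ℂ := (f z - f (z - h * Complex.I)) / h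

def dbarC (h : ℝ) (f : ℂ → ℂ) (z : ℂ) : ℂ :=
  (1 / 2) * ((1 / 2) * (cdp1 h f z + cdm1 h f z) + Complex.I * ((1 / 2) * (cdp2 h f z + cdm2 h f z)))

def dzC (h : ℝ) (f : ℂ → ℂ) (z : ℂ) : ℂ :=
  (1 / 2) * ((1 / 2) * (cdp1 h f z + cdm1 h f z) - Complex.I * ((1 / 2) * (cdp2 h f z + cdm2 h f z)))

/-- Symmetric differences on the integer lattice `ℤ²`. -/
def D1 (f : ℤ × ℤ → ℂ) (p : ℤ × ℤ) : ℂ := (f (p.1 + 1, p.2) - f (p.1 - 1, p.2)) / 2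
def D2 (f : ℤ × ℤ → ℂ) (p : ℤ × ℤ) : ℂ := (f (p.1, p.2 + 1) - f (p.1, p.2 - 1)) / 2

def dbarZ (f : ℤ × ℤ → ℂ) (p : ℤ × ℤ) : ℂ := (1 / 2) * (D1 f p + Complex.I * D2 f p)
def dzZ (f : ℤ × ℤ → ℂ) (p : ℤ × ℤ) : ℂ := (1 / 2) * (D1 f p - Complex.I * D2 f p)

/-- The fundamental solution of the discrete ∂̄-operator on `ℤ²`. -/
def Efun (p : ℤ × ℤ) : ℂ :=
  (1 / (4 * Real.pi ^ 2)) •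
    ∫ w in (Set.Icc (-Real.pi) Real.pi ×ˢ Set.Icc (-Real.pi) Real.pi),
      (2 / (Complex.I * Real.sin w.1 - Real.sin w.2)) *
        Complex.exp (Complex.I * (w.1 * p.1 + w.2 * p.2))

/-- The rescaled fundamental solution `E^h(z) = (1/h) E(z/h)` on `Z_h^2`. -/
def Eh (h : ℝ) (z : ℂ) : ℂ := (1 / h : ℂ) * Efun (round (z.re / h), round (z.im / h))

/-- The discrete delta `δ_0^h` on `Z_h^2`. -/
def deltah (h : ℝ) (z : ℂ) : ℂ := if z = 0 then (1 / h ^ 2 : ℂ) else 0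

/-- The discrete Bochner-Martinelli kernel. -/
def Kker (h : ℝ) (B : Set ℂ) (z ζ : ℂ) : ℂ :=
  (-(Eh h ((h : ℂ) - (z - ζ))) / 4) * (n1m h B z : ℂ) +
  (-(Eh h (-(h : ℂ) - (z - ζ))) / 4) * (n1p h B z : ℂ) +
  Complex.I * (-(Eh h ((h : ℂ) * Complex.I - (z - ζ))) / 4) * (n2m h B z : ℂ) +
  Complex.I * (-(Eh h (-((h : ℂ) * Complex.I) - (z - ζ))) / 4) * (n2p h B z : ℂ)

/-- Convergence of lattice sets `B^h` to a bounded open set `B ⊂ ℂ`. -/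
def ConvergesTo (Bh : ℝ → Set ℂ) (B : Set ℂ) : Prop :=
  ∀ ε > 0, ∃ δ > 0, ∀ h : ℝ, 0 < h → h < δ →
    (∀ α ∈ frontier B, ∃ β ∈ dBdry h (Bh h), dist α β < ε) ∧
    (∀ α ∈ dBdry h (Bh h), ∃ β ∈ frontier B, dist α β < ε) ∧
    (∀ α ∈ closure B, ∃ β ∈ Bh h, dist α β < ε) ∧
    (∀ α ∈ Bh h, ∃ β ∈ closure B, dist α β < ε)

/-! Since `n_i^± s = -h² ∂_i^{±,h}χ_B`, each identity is summation by parts along a lattice step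
`t ∈ {±h, ±hi}`: shifting the summation variable gives
`Σ_z f(z) (χ_B(z) - χ_B(z + t)) = Σ_{z ∈ B} (f(z) - f(z - t))`, and the summand on the left
vanishes off `∂B` because `z + t ∈ N(z)`. -/

lemma latt_sub_mem {h : ℝ} {z w : ℂ} (hz : z ∈ latt h) (hw : w ∈ latt h) : z - w ∈ latt h := by
  obtain ⟨m, n, rfl⟩ := hz
  obtain ⟨m', n', rfl⟩ := hw
  exact ⟨m - m', n - n', by push_cast; ring⟩

def lattPoint (h : ℝ) (p : ℤ × ℤ) : ℂ := h * ((p.1 : ℂ) + (p.2 : ℂ) * Complex.I)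

lemma latt_eq_range (h : ℝ) : latt h = range (lattPoint h) := by
  ext z
  simp [latt, lattPoint, eq_comm]

lemma antilipschitzWith_lattPoint {h : ℝ} (hh : 0 < h) :
    AntilipschitzWith (Real.toNNReal h⁻¹) (lattPoint h) := by
  refine AntilipschitzWith.of_le_mul_dist fun p q => ?_
  set w : ℂ := ((p.1 - q.1 : ℤ) : ℂ) + ((p.2 - q.2 : ℤ) : ℂ) * Complex.I
  have hpq : dist (lattPoint h p) (lattPoint h q) = h * ‖w‖ := by
    rw [dist_eq_norm, lattPoint, lattPoint, ← mul_sub, norm_mul, Complex.norm_real,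
      Real.norm_of_nonneg hh.le]
    congr 2
    simp only [w]
    push_cast
    ring
  have hre : dist p.1 q.1 ≤ ‖w‖ := by
    simpa [w, Int.dist_eq] using Complex.abs_re_le_norm w
  have him : dist p.2 q.2 ≤ ‖w‖ := by
    simpa [w, Int.dist_eq] using Complex.abs_im_le_norm w
  rw [Prod.dist_eq, hpq, Real.coe_toNNReal _ (inv_nonneg.mpr hh.le), inv_mul_cancel_left₀ hh.ne']
  exact max_le hre him

lemma finite_of_subset_latt {h : ℝ} (hh : 0 < h) {B : Set ℂ} (hB : B ⊆ latt h)
    (hbd : Bornology.IsBounded B) : B.Finite := by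
  have hpre := (antilipschitzWith_lattPoint hh).isBounded_preimage hbd
  have hfin : (lattPoint h ⁻¹' B).Finite := by
    simpa using Metric.finite_isBounded_inter_isClosed (s := univ)
      (isDiscrete_univ_iff.mpr inferInstance) hpre isClosed_univ
  rw [latt_eq_range] at hB
  exact (hfin.image _).subset (by rw [image_preimage_eq_of_subset hB])

lemma tsum_mul_indicator_sub_indicator_add {G : Type*} [AddCommGroup G] {B : Set G}
    (hB : B.Finite) (f : G → ℝ) (t : G) :
    ∑' z, f z * (B.indicator (fun _ => 1) z - B.indicator (fun _ => 1) (z + t))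
      = ∑' z : B, (f z - f (z - t)) := by
  have : Finite B := hB
  have hsum : Summable fun z => f z * B.indicator (fun _ => 1) z :=
    summable_of_hasFiniteSupport
      (hB.subset ((Function.support_mul_subset_right _ _).trans support_indicator_subset))
  have hsum_add : Summable fun z => f z * B.indicator (fun _ => 1) (z + t) :=
    summable_of_hasFiniteSupport ((hB.preimage (add_left_injective t).injOn).subset
      ((Function.support_mul_subset_right _ _).trans fun z hz => support_indicator_subset hz))
  have hshift : ∑' z, f z * B.indicator (fun _ => 1) (z + t)
      = ∑' z, f (z - t) * B.indicator (fun _ => 1) z := by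
    simpa using ((Equiv.subRight t).tsum_eq fun z => f z * B.indicator (fun _ => 1) (z + t)).symm
  simp_rw [mul_sub]
  rw [hsum.tsum_sub hsum_add, hshift, Summable.tsum_sub .of_finite .of_finite,
    tsum_subtype B f, tsum_subtype B fun z => f (z - t)]
  congr 1 <;> exact tsum_congr fun z => by by_cases hz : z ∈ B <;> simp [hz]

lemma neg_two_mul_div_sqrt_mul_half_mul_sqrt {a Q : ℝ} (c : ℝ) (ha : a ^ 2 ≤ Q) :
    -2 * a / √Q * (c / 2 * √Q) = -c * a := by
  rcases (sq_nonneg a).trans ha |>.eq_or_lt with hQ | hQ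
  · have ha0 : a = 0 := by nlinarith
    simp [ha0]
  · field_simp [(Real.sqrt_pos.mpr hQ).ne']

lemma sq_diff_chi_le_Qsum (h : ℝ) (B : Set ℂ) (z : ℂ) :
    dp1 h (chi B) z ^ 2 ≤ Qsum h B z ∧ dm1 h (chi B) z ^ 2 ≤ Qsum h B z ∧
      dp2 h (chi B) z ^ 2 ≤ Qsum h B z ∧ dm2 h (chi B) z ^ 2 ≤ Qsum h B z := by
  have := sq_nonneg (dp1 h (chi B) z)
  have := sq_nonneg (dm1 h (chi B) z)
  have := sq_nonneg (dp2 h (chi B) z)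
  have := sq_nonneg (dm2 h (chi B) z)
  refine ⟨?_, ?_, ?_, ?_⟩ <;> unfold Qsum <;> linarith

section Green

variable {h : ℝ} {B : Set ℂ} {t : ℂ}

lemma chi_add_eq_of_notMem_dBdry (hB : B ⊆ latt h) (ht : t ∈ latt h)
    (htN : ∀ z, z + t ∈ nbhd h z) {z : ℂ} (hz : z ∉ dBdry h B) : chi B (z + t) = chi B z := by
  have hzN : z ∈ nbhd h z := by simp [nbhd]
  by_contra hne
  have hmem : (z ∈ B ∧ z + t ∉ B) ∨ (z ∉ B ∧ z + t ∈ B) := by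
    by_cases hzB : z ∈ B <;> by_cases hztB : z + t ∈ B <;> simp_all [chi]
  rcases hmem with ⟨hzB, hztB⟩ | ⟨hzB, hztB⟩
  · exact hz ⟨hB hzB, ⟨z, hzN, hzB⟩, ⟨z + t, htN z, hztB⟩⟩
  · exact hz ⟨by simpa using latt_sub_mem (hB hztB) ht, ⟨z + t, htN z, hztB⟩, ⟨z, hzN, hzB⟩⟩

lemma tsum_dBdry_mul_chi_sub_chi_add (hB : B ⊆ latt h) (hfin : B.Finite) (ht : t ∈ latt h)
    (htN : ∀ z, z + t ∈ nbhd h z) (f : ℂ → ℝ) :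
    ∑' z : dBdry h B, f z * (chi B z - chi B (z + t)) = ∑' z : B, (f z - f (z - t)) := by
  refine (tsum_subtype_eq_of_support_subset fun z hz => ?_).trans
    (tsum_mul_indicator_sub_indicator_add hfin f t)
  by_contra hzB
  exact hz (show f z * (chi B z - chi B (z + t)) = 0 by
    rw [chi_add_eq_of_notMem_dBdry hB ht htN hzB, sub_self, mul_zero])

-- `d = ∂^{±,h}χ_B` and `d' = ∂^{∓,h}f` are both written as quotients along the step `t` with
-- denominator `c`: `(t, c)` is `(h, h)` or `(hi, h)` for forward `d`, `(-h, -h)` or `(-hi, -h)`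
-- for backward `d`.
lemma tsum_dBdry_mul_normal_mul_sden (hB : B ⊆ latt h) (hfin : B.Finite) (ht : t ∈ latt h)
    (htN : ∀ z, z + t ∈ nbhd h z) {c : ℝ} (hc : c ≠ 0) {d d' : ℂ → ℝ} (f : ℂ → ℝ)
    (hd : ∀ z, d z = (chi B (z + t) - chi B z) / c) (hd' : ∀ z, d' z = (f z - f (z - t)) / c)
    (hdQ : ∀ z, d z ^ 2 ≤ Qsum h B z) :
    ∑' z : dBdry h B, f z * (-2 * d z / √(Qsum h B z)) * sden h B z
      = h ^ 2 * ∑' z : B, d' z := by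
  have hterm : ∀ z, f z * (-2 * d z / √(Qsum h B z)) * sden h B z
      = h ^ 2 / c * (f z * (chi B z - chi B (z + t))) := fun z => by
    rw [mul_assoc, sden, neg_two_mul_div_sqrt_mul_half_mul_sqrt _ (hdQ z), hd]
    field_simp
    ring
  simp_rw [hterm, hd']
  rw [tsum_mul_left, tsum_dBdry_mul_chi_sub_chi_add hB hfin ht htN, tsum_div_const]
  ring

end Green

/-- Discrete Green's formula: `∫_{∂B} f n_i^± dS = ∫_B ∂_i^{∓,h} f dV^h`
for `i = 1, 2`, i.e. `Σ_{z∈∂B} f(z) n_i^±(z) s(z) = h² Σ_{z∈B} ∂_i^{∓,h}f(z)`. -/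
theorem stmt3 (h : ℝ) (hh : 0 < h) (B : Set ℂ) (hB : B ⊆ latt h)
    (hbd : Bornology.IsBounded B) (f : ℂ → ℝ) :
    (∑' z : (dBdry h B), f z * n1p h B z * sden h B z = h ^ 2 * ∑' z : B, dm1 h f z) ∧
    (∑' z : (dBdry h B), f z * n1m h B z * sden h B z = h ^ 2 * ∑' z : B, dp1 h f z) ∧
    (∑' z : (dBdry h B), f z * n2p h B z * sden h B z = h ^ 2 * ∑' z : B, dm2 h f z) ∧
    (∑' z : (dBdry h B), f z * n2m h B z * sden h B z = h ^ 2 * ∑' z : B, dp2 h f z) := by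
  have hfin := finite_of_subset_latt hh hB hbd
  have hQ := sq_diff_chi_le_Qsum h B
  have hh' : h ≠ 0 := hh.ne'
  refine ⟨?_, ?_, ?_, ?_⟩
  · exact tsum_dBdry_mul_normal_mul_sden hB hfin (t := h) ⟨1, 0, by simp⟩ (by simp [nbhd]) hh' f
      (fun z => rfl) (fun z => rfl) (fun z => (hQ z).1)
  · exact tsum_dBdry_mul_normal_mul_sden hB hfin (t := -h) ⟨-1, 0, by simp⟩
      (by simp [nbhd, ← sub_eq_add_neg]) (neg_ne_zero.mpr hh') f
      (fun z => by rw [dm1, ← sub_eq_add_neg, div_neg, ← neg_div, neg_sub])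
      (fun z => by rw [dp1, sub_neg_eq_add, div_neg, ← neg_div, neg_sub]) (fun z => (hQ z).2.1)
  · exact tsum_dBdry_mul_normal_mul_sden hB hfin (t := h * I) ⟨0, 1, by simp⟩ (by simp [nbhd]) hh' f
      (fun z => rfl) (fun z => rfl) (fun z => (hQ z).2.2.1)
  · exact tsum_dBdry_mul_normal_mul_sden hB hfin (t := -(h * I)) ⟨0, -1, by simp⟩
      (by simp [nbhd, ← sub_eq_add_neg]) (neg_ne_zero.mpr hh') f
      (fun z => by rw [dm2, ← sub_eq_add_neg, div_neg, ← neg_div, neg_sub])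
      (fun z => by rw [dp2, sub_neg_eq_add, div_neg, ← neg_div, neg_sub]) (fun z => (hQ z).2.2.2)

end
end

section
/- The function E(x,y) = (1/4π^2) ∫_{[−π,π]^2} (2/(i sin u − sin v)) e^{i(ux+vy)} du dv on Z^2 satisfies ∂_z̄^1 E = δ_0, where ∂_z̄^1 = (1/2)(∂_1^1 + i∂_2^1) with ∂_j^1 the symmetric difference with step 1, and δ_0 is the discrete Dirac delta (value 1 at the origin, 0 elsewhere). -/
noncomputable section
open Complex MeasureTheory Set
open scoped ENNReal

/-!
`E(p)` is the Fourier integral of `k(w) = 2 / (i sin u - sin v)` against the plane wave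
`e_w(p) = exp (i (u p₁ + v p₂))`. The operator `∂_z̄` acts on `e_w` as multiplication by its symbol
`(i sin u - sin v) / 2 = 1 / k(w)`, and, being a finite difference operator, it commutes with the
integral; so `∂_z̄ E(p) = (1 / 4π²) ∫ e_w(p) dw = δ₀(p)`. The analytic input is the integrability
of `k` on `[-π, π]²`: `|i sin u - sin v| ≥ |sin u|^{1/2} |sin v|^{1/2}`, and `|sin u|^{-1/2}` is
integrable by Jordan's inequality at the zeros of `sin`.
-/

open scoped Real

theorem intervalIntegrable_abs_rpow {r : ℝ} (hr : -1 < r) (a b : ℝ) :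
    IntervalIntegrable (fun x : ℝ => |x| ^ r) volume a b := by
  have h := locallyIntegrable_of_norm_le_rpow (μ := volume) (f := fun x : ℝ => |x| ^ r) (C := 1)
    (by simp) (by simpa using neg_lt.mpr hr)
    (Filter.Eventually.of_forall fun x => by
      simp [Real.norm_eq_abs, Real.abs_rpow_of_nonneg (abs_nonneg x)])
    (continuous_abs.measurable.pow_const r).aestronglyMeasurable
  exact (h.integrableOn_isCompact isCompact_uIcc).intervalIntegrable

theorem exists_abs_sin_eq_of_mem_Icc {u : ℝ} (hu : u ∈ Icc (-π) π) :
    ∃ t ∈ ({u, u - π, u + π} : Set ℝ), |t| ≤ π / 2 ∧ |Real.sin u| = |Real.sin t| := by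
  obtain ⟨hu₁, hu₂⟩ := hu
  by_cases hlo : u ≤ -(π / 2)
  · refine ⟨u + π, by simp, abs_le.mpr ⟨by linarith, by linarith⟩, ?_⟩
    rw [Real.sin_add_pi, abs_neg]
  by_cases hhi : π / 2 ≤ u
  · refine ⟨u - π, by simp, abs_le.mpr ⟨by linarith, by linarith⟩, ?_⟩
    rw [Real.sin_sub_pi, abs_neg]
  exact ⟨u, by simp, abs_le.mpr ⟨by linarith, by linarith⟩, rfl⟩

/-- Jordan's inequality near each of the zeros `0, ±π` of `sin` on `[-π, π]`. -/
theorem abs_sin_rpow_le {r : ℝ} (hr : r < 0) {u : ℝ} (hu : u ∈ Icc (-π) π) :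
    |Real.sin u| ^ r ≤ (2 / π) ^ r * (|u| ^ r + |u - π| ^ r + |u + π| ^ r) := by
  have h₁ := Real.rpow_nonneg (abs_nonneg u) r
  have h₂ := Real.rpow_nonneg (abs_nonneg (u - π)) r
  have h₃ := Real.rpow_nonneg (abs_nonneg (u + π)) r
  obtain ⟨t, ht, htπ, hsin⟩ := exists_abs_sin_eq_of_mem_Icc hu
  rcases eq_or_ne t 0 with rfl | ht₀
  · rw [hsin, Real.sin_zero, abs_zero, Real.zero_rpow hr.ne]
    positivity
  have ht_le : |t| ^ r ≤ |u| ^ r + |u - π| ^ r + |u + π| ^ r := by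
    rcases ht with rfl | rfl | rfl <;> linarith
  calc |Real.sin u| ^ r ≤ (2 / π * |t|) ^ r :=
        Real.rpow_le_rpow_of_nonpos (by positivity) (hsin ▸ Real.mul_abs_le_abs_sin htπ) hr.le
    _ = (2 / π) ^ r * |t| ^ r := Real.mul_rpow (by positivity) (abs_nonneg t)
    _ ≤ _ := by gcongr

theorem integrableOn_abs_sin_rpow {r : ℝ} (hr₁ : -1 < r) (hr₀ : r < 0) :
    IntegrableOn (fun u => |Real.sin u| ^ r) (Icc (-π) π) := by
  have hint (c : ℝ) : IntegrableOn (fun u => |u - c| ^ r) (Icc (-π) π) := by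
    rw [← intervalIntegrable_iff_integrableOn_Icc_of_le (by linarith [Real.pi_pos])]
    simpa using (intervalIntegrable_abs_rpow hr₁ (-π - c) (π - c)).comp_sub_right c
  have hbound : IntegrableOn (fun u => (2 / π) ^ r * (|u| ^ r + |u - π| ^ r + |u + π| ^ r))
      (Icc (-π) π) := by
    have h₀ := hint 0
    have hneg := hint (-π)
    simp only [sub_zero, sub_neg_eq_add] at h₀ hneg
    exact ((h₀.add (hint π)).add hneg).const_mul _
  refine hbound.mono' (Real.continuous_sin.abs.measurable.pow_const r).aestronglyMeasurable ?_
  refine ae_restrict_of_forall_mem measurableSet_Icc fun u hu => ?_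
  rw [Real.norm_eq_abs, abs_of_nonneg (Real.rpow_nonneg (abs_nonneg _) r)]
  exact abs_sin_rpow_le hr₀ hu

theorem norm_inv_I_mul_sub_le {a b : ℝ} (ha : a ≠ 0) (hb : b ≠ 0) :
    ‖(I * a - b)⁻¹‖ ≤ |a| ^ (-(1 / 2) : ℝ) * |b| ^ (-(1 / 2) : ℝ) := by
  have hab : 0 < |a| * |b| := by positivity
  rw [← Real.mul_rpow (abs_nonneg a) (abs_nonneg b), Real.rpow_neg hab.le, ← Real.sqrt_eq_rpow,
    norm_inv]
  refine inv_anti₀ (Real.sqrt_pos.mpr hab) ?_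
  rw [Complex.norm_def]
  refine Real.sqrt_le_sqrt ?_
  simp only [Complex.normSq_apply, Complex.sub_re, Complex.mul_re, Complex.I_re, Complex.I_im,
    Complex.ofReal_re, Complex.ofReal_im, Complex.sub_im, Complex.mul_im]
  nlinarith [sq_abs a, sq_abs b, sq_nonneg (|a| - |b|), abs_nonneg a, abs_nonneg b]

theorem I_mul_ofReal_sub_ofReal_ne_zero {a : ℝ} (b : ℝ) (ha : a ≠ 0) : I * a - b ≠ 0 :=
  fun h => ha (by simpa using congrArg Complex.im h)

theorem ae_sin_ne_zero : ∀ᵐ x : ℝ, Real.sin x ≠ 0 := by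
  refine measure_mono_null (fun x hx => ?_)
    ((countable_range fun n : ℤ => (n : ℝ) * π).measure_zero volume)
  exact Real.sin_eq_zero_iff.mp (not_not.mp hx)

theorem ae_sin_fst_ne_zero_and_sin_snd_ne_zero :
    ∀ᵐ w : ℝ × ℝ, Real.sin w.1 ≠ 0 ∧ Real.sin w.2 ≠ 0 :=
  (Measure.quasiMeasurePreserving_fst.ae ae_sin_ne_zero).and
    (Measure.quasiMeasurePreserving_snd.ae ae_sin_ne_zero)

def planeWave (w : ℝ × ℝ) (p : ℤ × ℤ) : ℂ := Complex.exp (I * (w.1 * p.1 + w.2 * p.2))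

theorem norm_planeWave (w : ℝ × ℝ) (p : ℤ × ℤ) : ‖planeWave w p‖ = 1 := by
  rw [planeWave, show I * (w.1 * p.1 + w.2 * p.2) = ((w.1 * p.1 + w.2 * p.2 : ℝ) : ℂ) * I by
    push_cast; ring]
  exact Complex.norm_exp_ofReal_mul_I _

theorem integrableOn_mul_planeWave (p : ℤ × ℤ) :
    IntegrableOn (fun w : ℝ × ℝ => 2 / (I * Real.sin w.1 - Real.sin w.2) * planeWave w p)
      (Icc (-π) π ×ˢ Icc (-π) π) := by
  have hbound : IntegrableOn
      (fun w : ℝ × ℝ => 2 * (|Real.sin w.1| ^ (-(1 / 2) : ℝ) * |Real.sin w.2| ^ (-(1 / 2) : ℝ)))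
      (Icc (-π) π ×ˢ Icc (-π) π) := by
    have h := integrableOn_abs_sin_rpow (r := -(1 / 2)) (by norm_num) (by norm_num)
    rw [IntegrableOn, Measure.volume_eq_prod, ← Measure.prod_restrict]
    exact (h.mul_prod h).const_mul 2
  refine hbound.mono' (by unfold planeWave; fun_prop) ?_
  filter_upwards [ae_restrict_of_ae ae_sin_fst_ne_zero_and_sin_snd_ne_zero] with w hw
  rw [norm_mul, norm_planeWave, mul_one, div_eq_mul_inv, norm_mul, Complex.norm_two]
  gcongr
  exact norm_inv_I_mul_sub_le hw.1 hw.2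

theorem setIntegral_exp_I_mul_int (n : ℤ) :
    ∫ u in Icc (-π) π, Complex.exp (I * (u * n)) = if n = 0 then 2 * (π : ℂ) else 0 := by
  rw [integral_Icc_eq_integral_Ioc, ← intervalIntegral.integral_of_le (by linarith [Real.pi_pos])]
  split_ifs with hn
  · simp only [hn, Int.cast_zero, mul_zero, Complex.exp_zero, intervalIntegral.integral_const,
      real_smul, mul_one]
    push_cast
    ring
  have hc : I * n ≠ 0 := mul_ne_zero I_ne_zero (Int.cast_ne_zero.mpr hn)
  simp_rw [show ∀ u : ℝ, I * (u * n) = I * n * u from fun u => by ring]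
  rw [integral_exp_mul_complex hc, div_eq_zero_iff]
  left
  have := Complex.sin_int_mul_pi n
  rw [Complex.sin] at this
  rw [show I * n * ((-π : ℝ) : ℂ) = -(n * π) * I by push_cast; ring,
    show I * n * ((π : ℝ) : ℂ) = n * π * I by ring]
  linear_combination (2 * I) * this +
    (Complex.exp (n * π * I) - Complex.exp (-(n * π) * I)) * I_sq

theorem setIntegral_planeWave (p : ℤ × ℤ) :
    ∫ w in Icc (-π) π ×ˢ Icc (-π) π, planeWave w p = if p = (0, 0) then 4 * (π : ℂ) ^ 2 else 0 := by
  have hsplit (w : ℝ × ℝ) : planeWave w p =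
      Complex.exp (I * (w.1 * p.1)) * Complex.exp (I * (w.2 * p.2)) := by
    rw [planeWave, ← Complex.exp_add, mul_add]
  simp_rw [hsplit]
  rw [Measure.volume_eq_prod, setIntegral_prod_mul (fun u : ℝ => Complex.exp (I * (u * p.1)))
    (fun v : ℝ => Complex.exp (I * (v * p.2))), setIntegral_exp_I_mul_int,
    setIntegral_exp_I_mul_int]
  simp only [ite_zero_mul_ite_zero, Prod.ext_iff]
  congr 1
  ring

theorem dbarZ_const_mul (a : ℂ) (f : ℤ × ℤ → ℂ) (p : ℤ × ℤ) :
    dbarZ (fun q => a * f q) p = a * dbarZ f p := by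
  simp only [dbarZ, D1, D2]
  ring

theorem dbarZ_integral {α : Type*} [MeasurableSpace α] {μ : Measure α} (f : ℤ × ℤ → α → ℂ)
    (hf : ∀ q, Integrable (f q) μ) (p : ℤ × ℤ) :
    dbarZ (fun q => ∫ w, f q w ∂μ) p = ∫ w, dbarZ (fun q => f q w) p ∂μ := by
  simp only [dbarZ, D1, D2]
  rw [integral_const_mul, integral_add, integral_div, integral_sub, integral_const_mul,
    integral_div, integral_sub]
  all_goals fun_prop

theorem dbarZ_planeWave (w : ℝ × ℝ) (p : ℤ × ℤ) :
    dbarZ (planeWave w) p = (I * Real.sin w.1 - Real.sin w.2) / 2 * planeWave w p := by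
  simp only [dbarZ, D1, D2, planeWave]
  push_cast
  rw [show I * (w.1 * (p.1 + 1) + w.2 * p.2) = I * (w.1 * p.1 + w.2 * p.2) + w.1 * I by ring,
    show I * (w.1 * (p.1 - 1) + w.2 * p.2) = I * (w.1 * p.1 + w.2 * p.2) + -w.1 * I by ring,
    show I * (w.1 * p.1 + w.2 * (p.2 + 1)) = I * (w.1 * p.1 + w.2 * p.2) + w.2 * I by ring,
    show I * (w.1 * p.1 + w.2 * (p.2 - 1)) = I * (w.1 * p.1 + w.2 * p.2) + -w.2 * I by ring,
    Complex.sin, Complex.sin]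
  simp only [Complex.exp_add]
  ring_nf
  rw [I_sq]
  ring

/-- `E` is the fundamental solution of the discrete ∂̄-operator on `ℤ²`:
`∂_z̄^1 E = δ_0`. -/
theorem stmt6 : ∀ p : ℤ × ℤ, dbarZ Efun p = if p = (0, 0) then 1 else 0 := by
  intro p
  have hEfun : Efun = fun q => ((1 / (4 * π ^ 2) : ℝ) : ℂ) *
      ∫ w in Icc (-π) π ×ˢ Icc (-π) π, 2 / (I * Real.sin w.1 - Real.sin w.2) * planeWave w q :=
    funext fun q => Complex.real_smul
  have hsymbol : ∀ᵐ w ∂volume.restrict (Icc (-π) π ×ˢ Icc (-π) π),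
      dbarZ (fun q => 2 / (I * Real.sin w.1 - Real.sin w.2) * planeWave w q) p = planeWave w p := by
    filter_upwards [ae_restrict_of_ae ae_sin_fst_ne_zero_and_sin_snd_ne_zero] with w hw
    have hden := I_mul_ofReal_sub_ofReal_ne_zero (Real.sin w.2) hw.1
    rw [dbarZ_const_mul, dbarZ_planeWave]
    field_simp
  rw [hEfun, dbarZ_const_mul, dbarZ_integral _ integrableOn_mul_planeWave,
    integral_congr_ae hsymbol, setIntegral_planeWave]
  have hπ : (π : ℂ) ≠ 0 := Complex.ofReal_ne_zero.mpr Real.pi_ne_zero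
  split_ifs
  · push_cast
    field_simp
  · rw [mul_zero]

end
end

section
/- (Holomorphicity of the discrete Bochner-Martinelli kernel) For fixed z ∈ ∂B, the function ζ ↦ K^h(z,ζ) satisfies ∂_ζ̄^h K^h(z,ζ) = 0 for all ζ ∉ ∂B and for all ζ ∉ N(z), where N(z) = {z, z±h, z±hi}. -/
noncomputable section
open Complex MeasureTheory Set
open scoped ENNReal

/-!
`Efun` is the Fourier integral of `2 / (i sin w₁ - sin w₂)`, the reciprocal of the symbol of the
symmetric discrete `∂̄` on `ℤ²`, so `∂̄ Efun` is the Fourier integral of a constant and vanishes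
off the origin by orthogonality of characters. The kernel `ζ ↦ K^h(z, ζ)` is a combination of the
translates `E^h(ζ - (z ∓ h))` and `E^h(ζ - (z ∓ ih))`, so `∂̄K^h` can only be nonzero at one of
these four poles, and there only if the matching normal component at `z` is nonzero. That happens
only when `χ_B` jumps between `z` and the pole, which puts the pole on the discrete boundary.
-/

def piSquare : Set (ℝ × ℝ) := Icc (-Real.pi) Real.pi ×ˢ Icc (-Real.pi) Real.pi

def dbarSymbol (w : ℝ × ℝ) : ℂ := 2 / (I * Real.sin w.1 - Real.sin w.2)

def latticeChar (p : ℤ × ℤ) (w : ℝ × ℝ) : ℂ := exp (I * (w.1 * p.1 + w.2 * p.2))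

lemma Efun_eq_integral (p : ℤ × ℤ) :
    Efun p = (1 / (4 * Real.pi ^ 2) : ℝ) • ∫ w in piSquare, dbarSymbol w * latticeChar p w :=
  rfl

lemma norm_latticeChar (p : ℤ × ℤ) (w : ℝ × ℝ) : ‖latticeChar p w‖ = 1 := by
  rw [latticeChar, show I * (w.1 * p.1 + w.2 * p.2) = ((w.1 * p.1 + w.2 * p.2 : ℝ) : ℂ) * I by
    push_cast; ring]
  exact norm_exp_ofReal_mul_I _

lemma integrable_dbarSymbol_mul_latticeChar {p : ℤ × ℤ}
    (hp : Integrable (fun w => dbarSymbol w * latticeChar p w) (volume.restrict piSquare))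
    (q : ℤ × ℤ) :
    Integrable (fun w => dbarSymbol w * latticeChar q w) (volume.restrict piSquare) :=
  hp.congr' (by unfold dbarSymbol latticeChar; fun_prop)
    (ae_of_all _ fun w => by simp only [norm_mul, norm_latticeChar])

lemma integral_exp_I_mul_intCast_eq_zero {k : ℤ} (hk : k ≠ 0) :
    ∫ x in Icc (-Real.pi) Real.pi, exp (I * k * x) = 0 := by
  have hc : I * k ≠ 0 := mul_ne_zero I_ne_zero (Int.cast_ne_zero.mpr hk)
  rw [integral_Icc_eq_integral_Ioc, ← intervalIntegral.integral_of_le (by linarith [Real.pi_pos]),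
    integral_exp_mul_complex hc, div_eq_zero_iff, sub_eq_zero, exp_eq_exp_iff_exists_int]
  exact Or.inl ⟨k, by push_cast; ring⟩

lemma integral_latticeChar_eq_zero {p : ℤ × ℤ} (hp : p ≠ 0) :
    ∫ w in piSquare, latticeChar p w = 0 := by
  have hsplit : ∀ w : ℝ × ℝ, latticeChar p w = exp (I * p.1 * w.1) * exp (I * p.2 * w.2) := by
    intro w; rw [latticeChar, ← exp_add]; ring_nf
  simp_rw [hsplit]
  rw [piSquare, Measure.volume_eq_prod, setIntegral_prod_mul (fun x : ℝ => exp (I * p.1 * x))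
    (fun y : ℝ => exp (I * p.2 * y))]
  by_cases h1 : p.1 = 0
  · rw [integral_exp_I_mul_intCast_eq_zero (fun h2 => hp (Prod.ext h1 h2)), mul_zero]
  · rw [integral_exp_I_mul_intCast_eq_zero h1, zero_mul]

lemma ae_I_mul_sin_sub_sin_ne_zero :
    ∀ᵐ w : ℝ × ℝ, I * Real.sin w.1 - Real.sin w.2 ≠ 0 := by
  have hcount : {x : ℝ | Real.sin x = 0}.Countable :=
    (countable_range fun n : ℤ => (n : ℝ) * Real.pi).mono fun x hx => Real.sin_eq_zero_iff.mp hx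
  have hnull : volume ({x : ℝ | Real.sin x = 0} ×ˢ (univ : Set ℝ)) = 0 := by
    rw [Measure.volume_eq_prod, Measure.prod_prod, hcount.measure_zero, zero_mul]
  refine measure_mono_null (fun w hw => ?_) hnull
  simpa [← ofReal_sin] using congrArg im (not_not.mp hw)

lemma exp_I_mul_sub_exp_neg_I_mul (x : ℂ) : exp (I * x) - exp (-(I * x)) = 2 * I * sin x := by
  rw [mul_comm I x, ← neg_mul, exp_mul_I, exp_mul_I, cos_neg, sin_neg]
  ring

lemma dbarSymbol_mul_latticeChar_difference (p : ℤ × ℤ) {w : ℝ × ℝ}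
    (hw : I * Real.sin w.1 - Real.sin w.2 ≠ 0) :
    dbarSymbol w * (latticeChar (p.1 + 1, p.2) w - latticeChar (p.1 - 1, p.2) w
      + I * (latticeChar (p.1, p.2 + 1) w - latticeChar (p.1, p.2 - 1) w))
      = 4 * latticeChar p w := by
  have shift : ∀ a b : ℤ, latticeChar (p.1 + a, p.2 + b) w
      = exp (I * (w.1 * a + w.2 * b)) * latticeChar p w := by
    intro a b; rw [latticeChar, latticeChar, ← exp_add]; push_cast; ring_nf
  have e1 := shift 1 0
  have e2 := shift (-1) 0
  have e3 := shift 0 1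
  have e4 := shift 0 (-1)
  simp only [add_zero, ← sub_eq_add_neg, Int.cast_zero, Int.cast_one, Int.cast_neg, mul_zero,
    mul_one, zero_add, zero_sub, mul_neg] at e1 e2 e3 e4
  rw [e1, e2, e3, e4, dbarSymbol]
  push_cast at hw ⊢
  field_simp
  linear_combination (2 * latticeChar p w) * (exp_I_mul_sub_exp_neg_I_mul w.1
    + I * exp_I_mul_sub_exp_neg_I_mul w.2) + 4 * latticeChar p w * sin w.2 * I_sq

lemma dbarZ_Efun_eq_zero {p : ℤ × ℤ} (hp : p ≠ 0) : dbarZ Efun p = 0 := by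
  set J : ℤ × ℤ → ℂ := fun q => ∫ w in piSquare, dbarSymbol w * latticeChar q w
  have hE : dbarZ Efun p = (1 / (4 * Real.pi ^ 2) : ℝ) / 4 *
      (J (p.1 + 1, p.2) - J (p.1 - 1, p.2) + I * (J (p.1, p.2 + 1) - J (p.1, p.2 - 1))) := by
    simp only [dbarZ, D1, D2, Efun_eq_integral, real_smul, J]; ring
  rw [hE]
  refine mul_eq_zero_of_right _ ?_
  by_cases hint : Integrable (fun w => dbarSymbol w * latticeChar p w) (volume.restrict piSquare)
  · have hq := integrable_dbarSymbol_mul_latticeChar hint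
    calc J (p.1 + 1, p.2) - J (p.1 - 1, p.2) + I * (J (p.1, p.2 + 1) - J (p.1, p.2 - 1))
        = ∫ w in piSquare, dbarSymbol w * (latticeChar (p.1 + 1, p.2) w
            - latticeChar (p.1 - 1, p.2) w
            + I * (latticeChar (p.1, p.2 + 1) w - latticeChar (p.1, p.2 - 1) w)) := by
          rw [← integral_sub (hq _) (hq _), ← integral_sub (hq _) (hq _), ← integral_const_mul,
            ← integral_add (by exact (hq _).sub (hq _)) (by exact ((hq _).sub (hq _)).const_mul I)]
          congr 1 with w
          ring
      _ = ∫ w in piSquare, 4 * latticeChar p w :=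
          integral_congr_ae (ae_restrict_of_ae (ae_I_mul_sin_sub_sin_ne_zero.mono
            fun w hw => dbarSymbol_mul_latticeChar_difference p hw))
      _ = 0 := by rw [integral_const_mul, integral_latticeChar_eq_zero hp, mul_zero]
  · -- without integrability every `J q` is a junk zero
    have hJ : ∀ q, J q = 0 := fun q =>
      integral_undef fun hq => hint (integrable_dbarSymbol_mul_latticeChar hq p)
    simp only [hJ, sub_self, mul_zero, add_zero]

section Lattice

variable {h : ℝ}

lemma add_mem_latt {z w : ℂ} (hz : z ∈ latt h) (hw : w ∈ latt h) : z + w ∈ latt h := by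
  obtain ⟨m, n, rfl⟩ := hz
  obtain ⟨m', n', rfl⟩ := hw
  exact ⟨m + m', n + n', by push_cast; ring⟩

lemma neg_mem_latt {z : ℂ} (hz : z ∈ latt h) : -z ∈ latt h := by
  obtain ⟨m, n, rfl⟩ := hz
  exact ⟨-m, -n, by push_cast; ring⟩

lemma sub_mem_latt {z w : ℂ} (hz : z ∈ latt h) (hw : w ∈ latt h) : z - w ∈ latt h := by
  simpa only [sub_eq_add_neg] using add_mem_latt hz (neg_mem_latt hw)

lemma ofReal_mem_latt : (h : ℂ) ∈ latt h := ⟨1, 0, by push_cast; ring⟩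

lemma ofReal_mul_I_mem_latt : (h : ℂ) * I ∈ latt h := ⟨0, 1, by push_cast; ring⟩

lemma dbarC_add (f g : ℂ → ℂ) (ζ : ℂ) :
    dbarC h (fun w => f w + g w) ζ = dbarC h f ζ + dbarC h g ζ := by
  simp only [dbarC, cdp1, cdm1, cdp2, cdm2]; ring

lemma dbarC_const_mul (a : ℂ) (f : ℂ → ℂ) (ζ : ℂ) :
    dbarC h (fun w => a * f w) ζ = a * dbarC h f ζ := by
  simp only [dbarC, cdp1, cdm1, cdp2, cdm2]; ring

lemma Eh_eq_Efun (hh : h ≠ 0) {z : ℂ} {m n : ℤ} (hz : z = h * (m + n * I)) :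
    Eh h z = (1 / h : ℂ) * Efun (m, n) := by
  have hre : z.re = h * m := by simp [hz]
  have him : z.im = h * n := by simp [hz]
  rw [Eh, hre, him, mul_div_cancel_left₀ _ hh, mul_div_cancel_left₀ _ hh, round_intCast,
    round_intCast]

lemma dbarC_Eh_sub_eq_dbarZ (hh : h ≠ 0) {c ζ : ℂ} {m n : ℤ} (hmn : ζ - c = h * (m + n * I)) :
    dbarC h (fun w => Eh h (w - c)) ζ = dbarZ Efun (m, n) / h ^ 2 := by
  have e0 : Eh h (ζ - c) = (1 / h : ℂ) * Efun (m, n) := Eh_eq_Efun hh hmn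
  have e1 : Eh h (ζ + h - c) = (1 / h : ℂ) * Efun (m + 1, n) :=
    Eh_eq_Efun hh (by push_cast; linear_combination hmn)
  have e2 : Eh h (ζ - h - c) = (1 / h : ℂ) * Efun (m - 1, n) :=
    Eh_eq_Efun hh (by push_cast; linear_combination hmn)
  have e3 : Eh h (ζ + h * I - c) = (1 / h : ℂ) * Efun (m, n + 1) :=
    Eh_eq_Efun hh (by push_cast; linear_combination hmn)
  have e4 : Eh h (ζ - h * I - c) = (1 / h : ℂ) * Efun (m, n - 1) :=
    Eh_eq_Efun hh (by push_cast; linear_combination hmn)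
  simp only [dbarC, cdp1, cdm1, cdp2, cdm2, dbarZ, D1, D2, e0, e1, e2, e3, e4]
  field_simp
  ring

lemma dbarC_Eh_sub_eq_zero (hh : h ≠ 0) {c ζ : ℂ} (hc : c ∈ latt h) (hζ : ζ ∈ latt h)
    (hne : ζ ≠ c) : dbarC h (fun w => Eh h (w - c)) ζ = 0 := by
  obtain ⟨m, n, hmn⟩ := sub_mem_latt hζ hc
  rw [dbarC_Eh_sub_eq_dbarZ hh hmn, dbarZ_Efun_eq_zero, zero_div]
  rintro ⟨⟩
  exact hne (sub_eq_zero.mp (by simpa using hmn))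

lemma mul_dbarC_Eh_sub_eq_zero (hh : h ≠ 0) {a c ζ : ℂ} (hc : c ∈ latt h) (hζ : ζ ∈ latt h)
    (ha : ζ = c → a = 0) : a * dbarC h (fun w => Eh h (w - c)) ζ = 0 := by
  by_cases hζc : ζ = c
  · rw [ha hζc, zero_mul]
  · rw [dbarC_Eh_sub_eq_zero hh hc hζ hζc, mul_zero]

lemma chi_eq_of_notMem_dBdry {B : Set ℂ} {x y : ℂ} (hy : y ∈ latt h) (hyB : y ∉ dBdry h B)
    (hx : x ∈ nbhd h y) : chi B x = chi B y := by
  have hself : y ∈ nbhd h y := mem_insert _ _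
  by_contra hne
  by_cases hxB : x ∈ B <;> by_cases hyB' : y ∈ B
  · simp [chi, hxB, hyB'] at hne
  · exact hyB ⟨hy, ⟨x, hx, hxB⟩, ⟨y, hself, hyB'⟩⟩
  · exact hyB ⟨hy, ⟨y, hself, hyB'⟩, ⟨x, hx, hxB⟩⟩
  · simp [chi, hxB, hyB'] at hne

end Lattice

section Kernel

variable {h : ℝ} {B : Set ℂ} {z : ℂ}

lemma n1m_eq_zero_of_notMem_dBdry (hz : z ∈ latt h) (hB : z - h ∉ dBdry h B) :
    n1m h B z = 0 := by
  have := chi_eq_of_notMem_dBdry (sub_mem_latt hz ofReal_mem_latt) hB (x := z) (by simp [nbhd])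
  simp [n1m, dm1, this]

lemma n1p_eq_zero_of_notMem_dBdry (hz : z ∈ latt h) (hB : z + h ∉ dBdry h B) :
    n1p h B z = 0 := by
  have := chi_eq_of_notMem_dBdry (add_mem_latt hz ofReal_mem_latt) hB (x := z) (by simp [nbhd])
  simp [n1p, dp1, this]

lemma n2m_eq_zero_of_notMem_dBdry (hz : z ∈ latt h) (hB : z - h * I ∉ dBdry h B) :
    n2m h B z = 0 := by
  have := chi_eq_of_notMem_dBdry (sub_mem_latt hz ofReal_mul_I_mem_latt) hB (x := z)
    (by simp [nbhd])
  simp [n2m, dm2, this]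

lemma n2p_eq_zero_of_notMem_dBdry (hz : z ∈ latt h) (hB : z + h * I ∉ dBdry h B) :
    n2p h B z = 0 := by
  have := chi_eq_of_notMem_dBdry (add_mem_latt hz ofReal_mul_I_mem_latt) hB (x := z)
    (by simp [nbhd])
  simp [n2p, dp2, this]

lemma Kker_eq_sum_Eh_sub :
    (fun w => Kker h B z w) = fun w =>
      (-(n1m h B z : ℂ) / 4) * Eh h (w - (z - h)) + (-(n1p h B z : ℂ) / 4) * Eh h (w - (z + h))
      + (I * (-(n2m h B z : ℂ) / 4)) * Eh h (w - (z - h * I))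
      + (I * (-(n2p h B z : ℂ) / 4)) * Eh h (w - (z + h * I)) := by
  funext w
  rw [Kker]
  ring_nf

lemma dbarC_Kker_eq_zero (hh : h ≠ 0) {ζ : ℂ} (hz : z ∈ latt h) (hζ : ζ ∈ latt h)
    (h1m : ζ = z - h → n1m h B z = 0) (h1p : ζ = z + h → n1p h B z = 0)
    (h2m : ζ = z - h * I → n2m h B z = 0) (h2p : ζ = z + h * I → n2p h B z = 0) :
    dbarC h (fun w => Kker h B z w) ζ = 0 := by
  rw [Kker_eq_sum_Eh_sub]
  simp only [dbarC_add, dbarC_const_mul]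
  rw [mul_dbarC_Eh_sub_eq_zero hh (sub_mem_latt hz ofReal_mem_latt) hζ
      fun e => by simp [h1m e],
    mul_dbarC_Eh_sub_eq_zero hh (add_mem_latt hz ofReal_mem_latt) hζ
      fun e => by simp [h1p e],
    mul_dbarC_Eh_sub_eq_zero hh (sub_mem_latt hz ofReal_mul_I_mem_latt) hζ
      fun e => by simp [h2m e],
    mul_dbarC_Eh_sub_eq_zero hh (add_mem_latt hz ofReal_mul_I_mem_latt) hζ
      fun e => by simp [h2p e]]
  ring

end Kernel

theorem stmt13_general (h : ℝ) (hh : 0 < h) (B : Set ℂ)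
    (z : ℂ) (hz : z ∈ dBdry h B) :
    (∀ ζ ∈ latt h, ζ ∉ dBdry h B → dbarC h (fun w => Kker h B z w) ζ = 0) ∧
    (∀ ζ ∈ latt h, ζ ∉ nbhd h z → dbarC h (fun w => Kker h B z w) ζ = 0) := by
  have hzl : z ∈ latt h := hz.1
  refine ⟨fun ζ hζ hζB => ?_, fun ζ hζ hζN => ?_⟩
  · apply dbarC_Kker_eq_zero hh.ne' hzl hζ <;> rintro rfl
    · exact n1m_eq_zero_of_notMem_dBdry hzl hζB
    · exact n1p_eq_zero_of_notMem_dBdry hzl hζB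
    · exact n2m_eq_zero_of_notMem_dBdry hzl hζB
    · exact n2p_eq_zero_of_notMem_dBdry hzl hζB
  · apply dbarC_Kker_eq_zero hh.ne' hzl hζ <;> rintro rfl <;> simp [nbhd] at hζN

/-- Holomorphicity of the discrete Bochner-Martinelli kernel: for fixed
`z ∈ ∂B`, `ζ ↦ K^h(z,ζ)` is discrete holomorphic at every `ζ ∉ ∂B` and at every `ζ ∉ N(z)`. -/
theorem stmt13 (h : ℝ) (hh : 0 < h) (B : Set ℂ) (hB : B ⊆ latt h)
    (z : ℂ) (hz : z ∈ dBdry h B) :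
    (∀ ζ ∈ latt h, ζ ∉ dBdry h B → dbarC h (fun w => Kker h B z w) ζ = 0) ∧
    (∀ ζ ∈ latt h, ζ ∉ nbhd h z → dbarC h (fun w => Kker h B z w) ζ = 0) :=
  stmt13_general h hh B z hz

end
end

section
/- Let B be a bounded open set in C and suppose B^h ⊂ Z_h^2 converges to B. Then for any open set U compactly contained in B, there exists δ > 0 such that for all h < δ, U ∩ Z_h^2 ⊂ B^h. -/
noncomputable section
open Complex MeasureTheory Set
open scoped ENNReal

/-! If a lattice point `z` of `U` were missing from `B^h`, a lattice path from a nearby point of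
`B^h` to `z` would cross the discrete boundary `∂B^h` close to `z`. Convergence puts a point of
`∂B` close to that, whereas `∂B` keeps a positive distance from the compact set `closure U ⊆ B`. -/

lemma abs_re_add_abs_im_le_two_mul_norm (w : ℂ) : |w.re| + |w.im| ≤ 2 * ‖w‖ := by
  linarith [Complex.abs_re_le_norm w, Complex.abs_im_le_norm w]

section LatticeBoundary

variable {h : ℝ} {S : Set ℂ}

lemma exists_mem_dBdry_of_nat_steps (hS : S ⊆ latt h) {v : ℂ} (hv : ∀ w, w - v ∈ nbhd h w)
    {z : ℂ} (hz : z ∉ S) (k : ℕ) (hk : z + k * v ∈ S) :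
    ∃ w ∈ dBdry h S, dist z w ≤ ‖(k : ℂ) * v‖ := by
  induction k with
  | zero => simp_all
  | succ k ih =>
    by_cases hk' : z + k * v ∈ S
    · obtain ⟨w, hw, hzw⟩ := ih hk'
      exact ⟨w, hw, hzw.trans (by simp only [norm_mul, Complex.norm_natCast]; gcongr; simp)⟩
    · have hprev : z + (k + 1 : ℕ) * v - v = z + k * v := by push_cast; ring
      refine ⟨z + (k + 1 : ℕ) * v, ⟨hS hk, ⟨_, mem_insert _ _, hk⟩, ⟨_, hv _, ?_⟩⟩, ?_⟩
      · rwa [hprev]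
      · rw [dist_self_add_right]

lemma exists_mem_dBdry_of_int_steps (hS : S ⊆ latt h) {v : ℂ}
    (hv : ∀ w, w + v ∈ nbhd h w ∧ w - v ∈ nbhd h w) {z : ℂ} (hz : z ∉ S) (k : ℤ)
    (hk : z + k * v ∈ S) : ∃ w ∈ dBdry h S, dist z w ≤ ‖(k : ℂ) * v‖ := by
  obtain ⟨n, rfl | rfl⟩ := Int.eq_nat_or_neg k
  · simpa using exists_mem_dBdry_of_nat_steps hS (fun w => (hv w).2) hz n (by simpa using hk)
  · have hneg : ∀ w, w - -v ∈ nbhd h w := fun w => by simpa using (hv w).1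
    simpa using exists_mem_dBdry_of_nat_steps hS hneg hz n (by simpa using hk)

/-- An inside and an outside lattice point are joined by an L-shaped lattice path, first
horizontal, then vertical; the discrete boundary is met on it. -/
lemma exists_mem_dBdry_dist_le (hS : S ⊆ latt h) {z β : ℂ}
    (hz : z ∈ latt h) (hzS : z ∉ S) (hβ : β ∈ S) :
    ∃ w ∈ dBdry h S, dist z w ≤ 2 * dist z β := by
  obtain ⟨a, b, rfl⟩ := hz
  obtain ⟨c, d, rfl⟩ := hS hβ
  have hhor : ∀ w, w + h ∈ nbhd h w ∧ w - h ∈ nbhd h w := by simp [nbhd]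
  have hver : ∀ w, w + h * I ∈ nbhd h w ∧ w - h * I ∈ nbhd h w := by simp [nbhd]
  set z : ℂ := h * (a + b * I)
  set corner : ℂ := z + ((c - a : ℤ) : ℂ) * h
  have hcorner : corner + ((d - b : ℤ) : ℂ) * (h * I) = h * (c + d * I) := by
    simp only [corner, z]; push_cast; ring
  have hpath : ‖((c - a : ℤ) : ℂ) * h‖ + ‖((d - b : ℤ) : ℂ) * (h * I)‖
      ≤ 2 * dist z (h * (c + d * I)) := by
    calc ‖((c - a : ℤ) : ℂ) * h‖ + ‖((d - b : ℤ) : ℂ) * (h * I)‖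
        = |(h * (c + d * I) - z).re| + |(h * (c + d * I) - z).im| := by
          simp [z, ← mul_sub, abs_mul, mul_comm, ← Int.cast_sub, Complex.norm_intCast]
      _ ≤ 2 * dist z (h * (c + d * I)) := by
          rw [dist_comm, Complex.dist_eq]; exact abs_re_add_abs_im_le_two_mul_norm _
  by_cases hcS : corner ∈ S
  · obtain ⟨w, hw, hzw⟩ := exists_mem_dBdry_of_int_steps hS hhor hzS (c - a) hcS
    exact ⟨w, hw, hzw.trans (by linarith [norm_nonneg (((d - b : ℤ) : ℂ) * (h * I))])⟩
  · obtain ⟨w, hw, hcw⟩ := exists_mem_dBdry_of_int_steps hS hver hcS (d - b) (hcorner ▸ hβ)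
    have hzc : dist z corner = ‖((c - a : ℤ) : ℂ) * h‖ := dist_self_add_right _ _
    exact ⟨w, hw, (dist_triangle z corner w).trans (by linarith)⟩

end LatticeBoundary

theorem stmt16_general (B : Set ℂ) (hB : IsOpen B) (hbd : Bornology.IsBounded B)
    (Bh : ℝ → Set ℂ) (hlat : ∀ h : ℝ, 0 < h → Bh h ⊆ latt h) (hconv : ConvergesTo Bh B)
    (U : Set ℂ) (hUB : closure U ⊆ B) :
    ∃ δ > 0, ∀ h : ℝ, 0 < h → h < δ → U ∩ latt h ⊆ Bh h := by
  have hcU : IsCompact (closure U) :=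
    Metric.isCompact_of_isClosed_isBounded isClosed_closure (hbd.subset hUB)
  obtain ⟨ε, hε, hthick⟩ := hcU.exists_thickening_subset_open hB hUB
  obtain ⟨δ, hδ, hδconv⟩ := hconv (ε / 3) (by positivity)
  refine ⟨δ, hδ, fun h hh hhδ z ⟨hzU, hzlat⟩ => ?_⟩
  by_contra hzBh
  obtain ⟨-, hbdry_near, hinner_near, -⟩ := hδconv h hh hhδ
  obtain ⟨β, hβ, hzβ⟩ := hinner_near z (subset_closure (hUB (subset_closure hzU)))
  obtain ⟨w, hw, hzw⟩ := exists_mem_dBdry_dist_le (hlat h hh) hzlat hzBh hβ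
  obtain ⟨γ, hγ, hwγ⟩ := hbdry_near w hw
  have hzγ : dist z γ < ε := by linarith [dist_triangle z w γ]
  have hγB : γ ∈ B :=
    hthick (Metric.mem_thickening_iff.mpr ⟨z, subset_closure hzU, by rwa [dist_comm]⟩)
  exact (hB.frontier_eq ▸ hγ).2 hγB

/-- Interior covering property: if `B^h → B` and `U` is open and compactly
contained in `B`, then `U ∩ Z_h^2 ⊆ B^h` for all sufficiently small `h`. -/
theorem stmt16 (B : Set ℂ) (hB : IsOpen B) (hbd : Bornology.IsBounded B)
    (Bh : ℝ → Set ℂ) (hlat : ∀ h : ℝ, 0 < h → Bh h ⊆ latt h) (hconv : ConvergesTo Bh B)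
    (U : Set ℂ) (hU : IsOpen U) (hUB : closure U ⊆ B) :
    ∃ δ > 0, ∀ h : ℝ, 0 < h → h < δ → U ∩ latt h ⊆ Bh h :=
  stmt16_general B hB hbd Bh hlat hconv U hUB

end
end
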